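/- arXiv:2410.22052 — 6 statements merged into one kernel-verified Lean document; each statement's English description precedes it below -/
import Mathlib

section
/- Let u ∈ K solve the variational inequality ⟨Au − ℓ, v − u⟩ ≥ 0 for all v ∈ K, and let ũ ∈ K̃ solve the perturbed variational inequality ⟨Ãũ − ℓ̃, ṽ − ũ⟩ ≥ 0 for all ṽ ∈ K̃. Then for all v ∈ K and all ṽ ∈ K̃ there holds ‖u − ũ‖_V² ≤ (2 + 4c²/α̃²) ‖u − ṽ‖_V² + (4/α̃) ⟨Au − ℓ, ṽ − u + v − ũ⟩ + (4/α̃²) ‖(A − Ã)ṽ − (ℓ − ℓ̃)‖_{Ṽ*}², where ‖·‖_{Ṽ*} denotes the dual norm on Ṽ* (the supremum of the functional over the unit ball of Ṽ). -/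
set_option maxHeartbeats 1000000
set_option synthInstance.maxHeartbeats 400000



private lemma strang_falk_aux (P N T Dn αt c : ℝ) (hαt : 0 < αt)
    (h : N ^ 2 ≤ 2 * c ^ 2 / αt ^ 2 * P ^ 2 + 2 / αt * T + 2 / αt ^ 2 * Dn ^ 2) :
    2 * P ^ 2 + 2 * N ^ 2
      ≤ (2 + 4 * c ^ 2 / αt ^ 2) * P ^ 2 + 4 / αt * T + 4 / αt ^ 2 * Dn ^ 2 := by
  have h2 : 2 * N ^ 2 ≤ 2 * (2 * c ^ 2 / αt ^ 2 * P ^ 2 + 2 / αt * T + 2 / αt ^ 2 * Dn ^ 2) := by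
    linarith
  have he : 2 * (2 * c ^ 2 / αt ^ 2 * P ^ 2 + 2 / αt * T + 2 / αt ^ 2 * Dn ^ 2)
      = 4 * c ^ 2 / αt ^ 2 * P ^ 2 + 4 / αt * T + 4 / αt ^ 2 * Dn ^ 2 := by ring
  rw [he] at h2
  linarith

/-- **Strang–Falk a priori error estimate** (Theorem 2.1).
`V` is a real Hilbert space, `W ⊆ V` a (complete) subspace carrying the norm of `V`,
`A : V → V*` and `At : W → W*` are linear, continuous and elliptic, `K ⊆ V` and
`Kt ⊆ W` are nonempty closed convex sets.  If `u` solves the variational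
inequality on `K` and `ut` the perturbed one on `Kt`, then for all `v ∈ K`,
`vt ∈ Kt`:
`‖u − ut‖² ≤ (2 + 4c²/α̃²)‖u − vt‖² + (4/α̃)⟨Au − ℓ, vt − u + v − ut⟩
  + (4/α̃²)‖(A − Ã)vt − (ℓ − ℓ̃)‖_{W*}²`. -/
theorem strang_falk_estimate
    {V : Type*} [NormedAddCommGroup V] [InnerProductSpace ℝ V] [CompleteSpace V]
    (W : Submodule ℝ V) [CompleteSpace W]
    (A : V →L[ℝ] V →L[ℝ] ℝ) (At : W →L[ℝ] W →L[ℝ] ℝ)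
    (l : V →L[ℝ] ℝ) (lt : W →L[ℝ] ℝ)
    (c α ct αt : ℝ) (hc : 0 < c) (hα : 0 < α) (hct : 0 < ct) (hαt : 0 < αt)
    (hAcont : ∀ v : V, ‖A v‖ ≤ c * ‖v‖)
    (hAell : ∀ v : V, α * ‖v‖ ^ 2 ≤ A v v)
    (hAtcont : ∀ w : W, ‖At w‖ ≤ ct * ‖w‖)
    (hAtell : ∀ w : W, αt * ‖w‖ ^ 2 ≤ At w w)
    (K : Set V) (hKne : K.Nonempty) (hKconv : Convex ℝ K) (hKcl : IsClosed K)
    (Kt : Set W) (hKtne : Kt.Nonempty) (hKtconv : Convex ℝ Kt) (hKtcl : IsClosed Kt)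
    (u : V) (hu : u ∈ K)
    (huVI : ∀ v ∈ K, 0 ≤ (A u - l) (v - u))
    (ut : W) (hut : ut ∈ Kt)
    (hutVI : ∀ vt ∈ Kt, 0 ≤ (At ut - lt) (vt - ut)) :
    ∀ v ∈ K, ∀ vt ∈ Kt,
      ‖u - (ut : V)‖ ^ 2 ≤
        (2 + 4 * c ^ 2 / αt ^ 2) * ‖u - (vt : V)‖ ^ 2
          + (4 / αt) * (A u - l) ((vt : V) - u + v - (ut : V))
          + (4 / αt ^ 2) *
              ‖(A (vt : V) - l).comp W.subtypeL - (At vt - lt)‖ ^ 2 := by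

  intro v hv vt hvt
  -- notation
  set ew : W := vt - ut with hew
  set e : V := (vt : V) - (ut : V) with he
  have hcoe : ((ew : W) : V) = e := by simp [hew, he]
  have hnorm : ‖ew‖ = ‖e‖ := by rw [← hcoe]; rfl
  set D : W →L[ℝ] ℝ := (A (vt : V) - l).comp W.subtypeL - (At vt - lt) with hD
  set N := ‖e‖ with hN
  set P := ‖u - (vt : V)‖ with hP
  set T := (A u - l) ((vt : V) - u + v - (ut : V)) with hT
  set Dn := ‖D‖ with hDn
  clear_value ew e D N P T Dn
  -- ellipticity + perturbed VI
  have hVI2 : 0 ≤ (At ut - lt) (vt - ut) := hutVI vt hvt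
  have hell : αt * N ^ 2 ≤ (At vt - lt) ew := by
    have h1 := hAtell ew
    have h2 : At ew ew = At vt ew - At ut ew := by
      have h : At ew = At vt - At ut := by rw [hew]; exact At.map_sub vt ut
      rw [h]; simp
    have h3 : (At ut - lt) ew = At ut ew - lt ew := by simp
    have h4 : (At vt - lt) ew = At vt ew - lt ew := by simp
    have hVI2' : 0 ≤ (At ut - lt) ew := by rw [hew]; exact hVI2
    rw [hnorm] at h1
    rw [h4]
    linarith [h1, h2, h3, hVI2']
  -- rewrite via D
  have hDval : D ew = (A (vt : V) - l) e - (At vt - lt) ew := by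
    simp [hD, hcoe]
  have hsplit : (A (vt : V) - l) e = A ((vt : V) - u) e + (A u - l) e := by
    have h : A ((vt : V) - u) = A (vt : V) - A u := A.map_sub _ _
    rw [h]; simp only [ContinuousLinearMap.sub_apply]; ring
  have hVI1 : 0 ≤ (A u - l) (v - u) := huVI v hv
  have hAul : (A u - l) e = T - (A u - l) (v - u) := by
    rw [hT, he]
    simp only [map_sub, map_add, ContinuousLinearMap.sub_apply]
    ring
  have hbound1 : A ((vt : V) - u) e ≤ c * P * N := by
    calc A ((vt : V) - u) e ≤ |A ((vt : V) - u) e| := le_abs_self _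
    _ ≤ ‖A ((vt : V) - u)‖ * ‖e‖ := (A ((vt : V) - u)).le_opNorm e
    _ ≤ (c * ‖(vt : V) - u‖) * ‖e‖ := by
        apply mul_le_mul_of_nonneg_right (hAcont _) (norm_nonneg _)
    _ = c * P * N := by rw [hP, hN, norm_sub_rev]
  have hbound2 : -(D ew) ≤ Dn * N := by
    have h := (D.le_opNorm ew)
    rw [hnorm, ← hDn, Real.norm_eq_abs] at h
    linarith [neg_abs_le (D ew), h]
  -- main chain
  have hchain : αt * N ^ 2 ≤ c * P * N + T + Dn * N := by
    have h5 : (At vt - lt) ew = (A (vt : V) - l) e - D ew := by linarith [hDval]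
    calc αt * N ^ 2 ≤ (At vt - lt) ew := hell
    _ = A ((vt : V) - u) e + (A u - l) e - D ew := by rw [h5, hsplit]
    _ = A ((vt : V) - u) e + T - (A u - l) (v - u) - D ew := by rw [hAul]; ring
    _ ≤ c * P * N + T + Dn * N := by linarith [hbound1, hbound2, hVI1]
  -- quadratic bound on N^2
  have hNnn : 0 ≤ N := by rw [hN]; exact norm_nonneg _
  have hPnn : 0 ≤ P := by rw [hP]; exact norm_nonneg _
  have hDnn : 0 ≤ Dn := by rw [hDn]; exact ContinuousLinearMap.opNorm_nonneg D
  have hq : αt ^ 2 * N ^ 2 ≤ 2 * c ^ 2 * P ^ 2 + 2 * αt * T + 2 * Dn ^ 2 := by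
    nlinarith [sq_nonneg (αt * N - 2 * c * P), sq_nonneg (αt * N - 2 * Dn),
      mul_le_mul_of_nonneg_left hchain (le_of_lt (by positivity : (0:ℝ) < 2 * αt))]
  -- triangle inequality squared
  have htri : ‖u - (ut : V)‖ ^ 2 ≤ 2 * P ^ 2 + 2 * N ^ 2 := by
    have h : ‖u - (ut : V)‖ ≤ P + N := by
      rw [hP, hN, he]
      calc ‖u - (ut : V)‖ = ‖(u - (vt : V)) + ((vt : V) - (ut : V))‖ := by
            rw [sub_add_sub_cancel]
      _ ≤ ‖u - (vt : V)‖ + ‖(vt : V) - (ut : V)‖ := norm_add_le _ _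
    nlinarith [sq_nonneg (P - N), norm_nonneg (u - (ut : V))]
  have hαt2 : (0:ℝ) < αt ^ 2 := by positivity
  have hN2 : N ^ 2 ≤ 2 * c ^ 2 / αt ^ 2 * P ^ 2 + 2 / αt * T + 2 / αt ^ 2 * Dn ^ 2 := by
    have heq : 2 * c ^ 2 / αt ^ 2 * P ^ 2 + 2 / αt * T + 2 / αt ^ 2 * Dn ^ 2
        = (2 * c ^ 2 * P ^ 2 + 2 * αt * T + 2 * Dn ^ 2) / αt ^ 2 := by
      field_simp
    rw [heq, le_div_iff₀ hαt2, mul_comm]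
    exact hq
  have hfin := strang_falk_aux P N T Dn αt c hαt hN2
  linarith only [htri, hfin]
end

section
/- Let u ∈ K solve the variational inequality ⟨Au − ℓ, v − u⟩ ≥ 0 for all v ∈ K, and let ũ ∈ K̃ solve the perturbed variational inequality ⟨Ãũ − ℓ̃, ṽ − ũ⟩ ≥ 0 for all ṽ ∈ K̃. Then for all v ∈ K and all ṽ ∈ K̃ there holds ‖ũ − ṽ‖_V² ≤ (2/α̃) ⟨Au − ℓ, ṽ − u + v − ũ⟩ + (2c²/α̃²) ‖u − ṽ‖_V² + (2/α̃²) ‖(A − Ã)ṽ − (ℓ − ℓ̃)‖_{Ṽ*}², where ‖·‖_{Ṽ*} denotes the dual norm on Ṽ*. -/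
set_option maxHeartbeats 1000000
set_option synthInstance.maxHeartbeats 1000000


/-- Intermediate estimate in the proof of the Strang–Falk theorem:
`‖ũ − ṽ‖² ≤ (2/α̃)⟨Au − ℓ, ṽ − u + v − ũ⟩ + (2c²/α̃²)‖u − ṽ‖²
  + (2/α̃²)‖(A − Ã)ṽ − (ℓ − ℓ̃)‖_{W*}²` for all `v ∈ K`, `ṽ ∈ K̃`. -/
theorem strang_falk_intermediate_estimate
    {V : Type*} [NormedAddCommGroup V] [InnerProductSpace ℝ V] [CompleteSpace V]
    (W : Submodule ℝ V) [CompleteSpace W]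
    (A : V →L[ℝ] V →L[ℝ] ℝ) (At : W →L[ℝ] W →L[ℝ] ℝ)
    (l : V →L[ℝ] ℝ) (lt : W →L[ℝ] ℝ)
    (c α ct αt : ℝ) (hc : 0 < c) (hα : 0 < α) (hct : 0 < ct) (hαt : 0 < αt)
    (hAcont : ∀ v : V, ‖A v‖ ≤ c * ‖v‖)
    (hAell : ∀ v : V, α * ‖v‖ ^ 2 ≤ A v v)
    (hAtcont : ∀ w : W, ‖At w‖ ≤ ct * ‖w‖)
    (hAtell : ∀ w : W, αt * ‖w‖ ^ 2 ≤ At w w)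
    (K : Set V) (hKne : K.Nonempty) (hKconv : Convex ℝ K) (hKcl : IsClosed K)
    (Kt : Set W) (hKtne : Kt.Nonempty) (hKtconv : Convex ℝ Kt) (hKtcl : IsClosed Kt)
    (u : V) (hu : u ∈ K)
    (huVI : ∀ v ∈ K, 0 ≤ (A u - l) (v - u))
    (ut : W) (hut : ut ∈ Kt)
    (hutVI : ∀ vt ∈ Kt, 0 ≤ (At ut - lt) (vt - ut)) :
    ∀ v ∈ K, ∀ vt ∈ Kt,
      ‖(ut : V) - (vt : V)‖ ^ 2 ≤
        (2 / αt) * (A u - l) ((vt : V) - u + v - (ut : V))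
          + (2 * c ^ 2 / αt ^ 2) * ‖u - (vt : V)‖ ^ 2
          + (2 / αt ^ 2) *
              ‖(A (vt : V) - l).comp W.subtypeL - (At vt - lt)‖ ^ 2 := by
  intro v hv vt hvt
  set e : W := ut - vt with he
  set S : ℝ := (A u - l) ((vt : V) - u + v - (ut : V)) with hS
  set D : W →L[ℝ] ℝ := (A (vt : V) - l).comp W.subtypeL - (At vt - lt) with hD
  set X : ℝ := ‖u - (vt : V)‖ with hX
  have hcoe : ((e : W) : V) = (ut : V) - (vt : V) := by simp [he]
  have hnorm : ‖(ut : V) - (vt : V)‖ = ‖e‖ := by rw [← hcoe]; rfl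
  have h1 : αt * ‖e‖ ^ 2 ≤ At e e := hAtell e
  have h2 : At e e = At ut e - At vt e := by
    rw [he, At.map_sub, ContinuousLinearMap.sub_apply]
  have h3 : At ut e ≤ lt e := by
    have hT := hutVI vt hvt
    have hvu : vt - ut = -e := by rw [he]; abel
    rw [hvu, ContinuousLinearMap.sub_apply, map_neg, map_neg] at hT
    linarith
  have h4 : D e = A (vt : V) ((e : W) : V) - l ((e : W) : V) - At vt e + lt e := by
    simp [hD, ContinuousLinearMap.sub_apply]
    ring
  have h5 : A (u - (vt : V)) ((e : W) : V)
      = A u ((e : W) : V) - A (vt : V) ((e : W) : V) := by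
    rw [A.map_sub, ContinuousLinearMap.sub_apply]
  have h6 : -(A u ((e : W) : V) - l ((e : W) : V)) ≤ S := by
    have hS0 := huVI v hv
    have hsplit : S = (A u - l) ((vt : V) - (ut : V)) + (A u - l) (v - u) := by
      rw [hS, ← map_add]
      congr 1
      abel
    have hneg : (vt : V) - (ut : V) = -(((e : W) : V)) := by rw [hcoe]; abel
    rw [hsplit, hneg, map_neg, ContinuousLinearMap.sub_apply]
    linarith
  have h7 : A (u - (vt : V)) ((e : W) : V) ≤ c * X * ‖e‖ := by
    calc A (u - (vt : V)) ((e : W) : V) ≤ ‖A (u - (vt : V))‖ * ‖((e : W) : V)‖ :=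
          le_trans (le_abs_self _) ((A (u - (vt : V))).le_opNorm _)
      _ ≤ (c * X) * ‖e‖ := by
          have hEe : ‖((e : W) : V)‖ = ‖e‖ := rfl
          rw [hEe]
          exact mul_le_mul_of_nonneg_right (hAcont _) (norm_nonneg _)
  have h8 : D e ≤ ‖D‖ * ‖e‖ := le_trans (le_abs_self _) (D.le_opNorm _)
  have hmain : αt * ‖e‖ ^ 2 ≤ S + c * X * ‖e‖ + ‖D‖ * ‖e‖ := by
    linarith [h1, h2, h3, h4, h5, h6, h7, h8]
  have key : αt ^ 2 * ‖e‖ ^ 2 ≤ 2 * αt * S + 2 * c ^ 2 * X ^ 2 + 2 * ‖D‖ ^ 2 := by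
    nlinarith [sq_nonneg (c * X - (αt / 2) * ‖e‖), sq_nonneg (‖D‖ - (αt / 2) * ‖e‖),
      mul_le_mul_of_nonneg_left hmain (le_of_lt hαt), sq_nonneg ‖e‖]
  have hαt2 : (0:ℝ) < αt ^ 2 := by positivity
  rw [hnorm]
  have hdiv : ‖e‖ ^ 2 ≤ (2 * αt * S + 2 * c ^ 2 * X ^ 2 + 2 * ‖D‖ ^ 2) / αt ^ 2 := by
    rw [le_div_iff₀ hαt2]; linarith [key]
  calc ‖e‖ ^ 2 ≤ (2 * αt * S + 2 * c ^ 2 * X ^ 2 + 2 * ‖D‖ ^ 2) / αt ^ 2 := hdiv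
    _ = (2 / αt) * S + (2 * c ^ 2 / αt ^ 2) * X ^ 2 + (2 / αt ^ 2) * ‖D‖ ^ 2 := by
        field_simp
end

section
/- Let u ∈ K solve ⟨Au − ℓ, v − u⟩ ≥ 0 for all v ∈ K, let u* ∈ K̃ solve the (unperturbed) discrete variational inequality ⟨Au* − ℓ, ṽ − u*⟩ ≥ 0 for all ṽ ∈ K̃, and let ũ ∈ K̃ solve the perturbed discrete variational inequality ⟨Ãũ − ℓ̃, ṽ − ũ⟩ ≥ 0 for all ṽ ∈ K̃. Then for all v ∈ K and all ṽ ∈ K̃ there holds ‖u − ũ‖_V² ≤ (4 + 8c²/α²) ‖u − ṽ‖_V² + (8/α) ⟨Au − ℓ, ṽ − u + v − u*⟩ + (8/α̃²) ‖(A − Ã)u* − (ℓ − ℓ̃)‖_{Ṽ*}², where ‖·‖_{Ṽ*} denotes the dual norm on Ṽ*. -/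
/-!
Split `u - ũ = (u - u*) + (u* - ũ)`. The first part is a discretization error: testing the
continuous inequality with `v` and the unperturbed discrete one with `ṽ`, coercivity and
continuity of `A` give Falk's bound `α‖u - u*‖² ≤ ⟨Au - ℓ, ṽ - u + v - u*⟩ + c‖u - u*‖‖u - ṽ‖`.
The second part is a perturbation error: testing the two discrete inequalities with each other's
solution, coercivity of `Ã` gives `α̃‖u* - ũ‖ ≤ ‖(A - Ã)u* - (ℓ - ℓ̃)‖_{Ṽ*}`. Completing squares
combines the two bounds.
-/

section VariationalInequality

variable {E : Type*} [SeminormedAddCommGroup E] [NormedSpace ℝ E]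
  (A : E →L[ℝ] E →L[ℝ] ℝ) (l : E →L[ℝ] ℝ) {α c : ℝ}

theorem mul_norm_sub_sq_le_falk (hAcont : ∀ x, ‖A x‖ ≤ c * ‖x‖)
    (hAell : ∀ x, α * ‖x‖ ^ 2 ≤ A x x) {u u' v w : E}
    (hu : 0 ≤ (A u - l) (v - u)) (hu' : 0 ≤ (A u' - l) (w - u')) :
    α * ‖u - u'‖ ^ 2 ≤ (A u - l) (w - u + v - u') + c * ‖u - u'‖ * ‖u - w‖ := by
  have hsplit : A (u - u') (u - u') = (A u - l) (w - u + v - u') - (A u - l) (v - u)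
      - (A u' - l) (w - u') + A (u - u') (u - w) := by
    simp only [map_sub, map_add, sub_apply]
    ring
  have hcont : A (u - u') (u - w) ≤ c * ‖u - u'‖ * ‖u - w‖ :=
    calc A (u - u') (u - w) ≤ ‖A (u - u')‖ * ‖u - w‖ :=
          (le_abs_self _).trans ((A (u - u')).le_opNorm _)
      _ ≤ c * ‖u - u'‖ * ‖u - w‖ := by gcongr; exact hAcont _
  linarith [hAell (u - u')]

theorem mul_norm_sub_le_norm_sub_residual
    (hAell : ∀ x, α * ‖x‖ ^ 2 ≤ A x x) (g : E →L[ℝ] ℝ) {x y : E}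
    (hy : 0 ≤ (A y - l) (x - y)) (hx : 0 ≤ g (y - x)) :
    α * ‖x - y‖ ≤ ‖g - (A x - l)‖ := by
  have hsplit : A (x - y) (x - y) = (g - (A x - l)) (y - x) - g (y - x) - (A y - l) (x - y) := by
    simp only [map_sub, sub_apply]
    ring
  have hbound : α * ‖x - y‖ ^ 2 ≤ ‖g - (A x - l)‖ * ‖x - y‖ := by
    have := (le_abs_self _).trans ((g - (A x - l)).le_opNorm (y - x))
    rw [norm_sub_rev y x] at this
    linarith [hAell (x - y)]
  rcases (norm_nonneg (x - y)).eq_or_lt with h | h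
  · rw [← h, mul_zero]
    exact norm_nonneg _
  · rw [sq, ← mul_assoc] at hbound
    exact le_of_mul_le_mul_right hbound h

end VariationalInequality

theorem sq_le_of_le_add_of_mul_sq_le {α c s t d D m : ℝ} (hα : 0 < α) (hm : 0 ≤ m)
    (hmsd : m ≤ s + d) (h : α * s ^ 2 ≤ D + c * s * t) :
    m ^ 2 ≤ (4 + 8 * c ^ 2 / α ^ 2) * t ^ 2 + 8 / α * D + 8 * d ^ 2 := by
  have hm2 : m ^ 2 ≤ 2 * s ^ 2 + 2 * d ^ 2 := by
    nlinarith [sq_nonneg (s - d)]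
  -- `3s² - 4s(ct/α) + 4(ct/α)² = (s - 2ct/α)² + 2s² ≥ 0` absorbs the cross term.
  have hs2 : s ^ 2 ≤ 2 * t ^ 2 + 4 * (c * t / α) ^ 2 + 4 / α * D := by
    have hD : 4 * s ^ 2 - 4 * s * (c * t / α) ≤ 4 / α * D := by
      rw [div_mul_eq_mul_div, le_div_iff₀ hα]
      field_simp
      linarith
    nlinarith [sq_nonneg (s - 2 * (c * t / α)), sq_nonneg t]
  calc m ^ 2 ≤ 2 * (2 * t ^ 2 + 4 * (c * t / α) ^ 2 + 4 / α * D) + 2 * d ^ 2 := by linarith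
    _ ≤ 2 * (2 * t ^ 2 + 4 * (c * t / α) ^ 2 + 4 / α * D) + 2 * d ^ 2 + 6 * d ^ 2 := by
      linarith [sq_nonneg d]
    _ = (4 + 8 * c ^ 2 / α ^ 2) * t ^ 2 + 8 / α * D + 8 * d ^ 2 := by ring

theorem apriori_error_perturbation_after_discretization_general
    {V : Type*} [NormedAddCommGroup V] [InnerProductSpace ℝ V]
    (W : Submodule ℝ V)
    (A : V →L[ℝ] V →L[ℝ] ℝ) (At : W →L[ℝ] W →L[ℝ] ℝ)
    (l : V →L[ℝ] ℝ) (lt : W →L[ℝ] ℝ)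
    (c α αt : ℝ) (hα : 0 < α) (hαt : 0 < αt)
    (hAcont : ∀ v : V, ‖A v‖ ≤ c * ‖v‖)
    (hAell : ∀ v : V, α * ‖v‖ ^ 2 ≤ A v v)
    (hAtell : ∀ w : W, αt * ‖w‖ ^ 2 ≤ At w w)
    (K : Set V)
    (Kt : Set W)
    (u : V)
    (huVI : ∀ v ∈ K, 0 ≤ (A u - l) (v - u))
    (ustar : W) (hustar : ustar ∈ Kt)
    (hustarVI : ∀ vt ∈ Kt, 0 ≤ (A (ustar : V) - l) ((vt : V) - (ustar : V)))
    (ut : W) (hut : ut ∈ Kt)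
    (hutVI : ∀ vt ∈ Kt, 0 ≤ (At ut - lt) (vt - ut)) :
    ∀ v ∈ K, ∀ vt ∈ Kt,
      ‖u - (ut : V)‖ ^ 2 ≤
        (4 + 8 * c ^ 2 / α ^ 2) * ‖u - (vt : V)‖ ^ 2
          + (8 / α) * (A u - l) ((vt : V) - u + v - (ustar : V))
          + (8 / αt ^ 2) *
              ‖(A (ustar : V) - l).comp W.subtypeL - (At ustar - lt)‖ ^ 2 := by
  intro v hv vt hvt
  have hfalk := mul_norm_sub_sq_le_falk A l hAcont hAell (huVI v hv) (hustarVI vt hvt)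
  have hpert : αt * ‖ustar - ut‖ ≤ ‖(A (ustar : V) - l).comp W.subtypeL - (At ustar - lt)‖ :=
    mul_norm_sub_le_norm_sub_residual At lt hAtell _ (hutVI ustar hustar)
      (by simpa using hustarVI ut hut)
  have htri : ‖u - (ut : V)‖ ≤ ‖u - (ustar : V)‖
      + ‖(A (ustar : V) - l).comp W.subtypeL - (At ustar - lt)‖ / αt := by
    refine (norm_sub_le_norm_sub_add_norm_sub u ustar ut).trans ?_
    gcongr
    exact (le_div_iff₀' hαt).2 hpert
  calc ‖u - (ut : V)‖ ^ 2 ≤ _ :=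
        sq_le_of_le_add_of_mul_sq_le hα (norm_nonneg _) htri hfalk
    _ = _ := by rw [div_pow]; ring

/-- Corollary 3.1: a priori error estimate for perturbations introduced after
discretization.  `u ∈ K` solves the continuous VI, `ustar ∈ K̃` the unperturbed
discrete VI and `ut ∈ K̃` the perturbed discrete VI.  Then for all `v ∈ K`,
`vt ∈ K̃`:
`‖u − ũ‖² ≤ (4 + 8c²/α²)‖u − ṽ‖² + (8/α)⟨Au − ℓ, ṽ − u + v − u*⟩
  + (8/α̃²)‖(A − Ã)u* − (ℓ − ℓ̃)‖_{W*}²`. -/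
theorem apriori_error_perturbation_after_discretization
    {V : Type*} [NormedAddCommGroup V] [InnerProductSpace ℝ V] [CompleteSpace V]
    (W : Submodule ℝ V) [CompleteSpace W]
    (A : V →L[ℝ] V →L[ℝ] ℝ) (At : W →L[ℝ] W →L[ℝ] ℝ)
    (l : V →L[ℝ] ℝ) (lt : W →L[ℝ] ℝ)
    (c α ct αt : ℝ) (hc : 0 < c) (hα : 0 < α) (hct : 0 < ct) (hαt : 0 < αt)
    (hAcont : ∀ v : V, ‖A v‖ ≤ c * ‖v‖)
    (hAell : ∀ v : V, α * ‖v‖ ^ 2 ≤ A v v)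
    (hAtcont : ∀ w : W, ‖At w‖ ≤ ct * ‖w‖)
    (hAtell : ∀ w : W, αt * ‖w‖ ^ 2 ≤ At w w)
    (K : Set V) (hKne : K.Nonempty) (hKconv : Convex ℝ K) (hKcl : IsClosed K)
    (Kt : Set W) (hKtne : Kt.Nonempty) (hKtconv : Convex ℝ Kt) (hKtcl : IsClosed Kt)
    (u : V) (hu : u ∈ K)
    (huVI : ∀ v ∈ K, 0 ≤ (A u - l) (v - u))
    (ustar : W) (hustar : ustar ∈ Kt)
    (hustarVI : ∀ vt ∈ Kt, 0 ≤ (A (ustar : V) - l) ((vt : V) - (ustar : V)))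
    (ut : W) (hut : ut ∈ Kt)
    (hutVI : ∀ vt ∈ Kt, 0 ≤ (At ut - lt) (vt - ut)) :
    ∀ v ∈ K, ∀ vt ∈ Kt,
      ‖u - (ut : V)‖ ^ 2 ≤
        (4 + 8 * c ^ 2 / α ^ 2) * ‖u - (vt : V)‖ ^ 2
          + (8 / α) * (A u - l) ((vt : V) - u + v - (ustar : V))
          + (8 / αt ^ 2) *
              ‖(A (ustar : V) - l).comp W.subtypeL - (At ustar - lt)‖ ^ 2 :=
  apriori_error_perturbation_after_discretization_general W A At l lt c α αt hα hαt hAcont hAell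
    hAtell K Kt u huVI ustar hustar hustarVI ut hut hutVI
end

section
/- Let u ∈ K solve ⟨Au − ℓ, v − u⟩ ≥ 0 for all v ∈ K, and let u* ∈ K̃ solve the discrete variational inequality with the same (unperturbed) operator and data: ⟨Au* − ℓ, ṽ − u*⟩ ≥ 0 for all ṽ ∈ K̃. Then for all v ∈ K and all ṽ ∈ K̃ there holds ‖u − u*‖_V² ≤ (2 + 4c²/α²) ‖u − ṽ‖_V² + (4/α) ⟨Au − ℓ, ṽ − u + v − u*⟩. -/
/-!
Testing the coercivity of `A` with `u - u*` and using both variational inequalities, the terms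
in `ℓ` cancel against the consistency error `⟨Au − ℓ, ṽ − u + v − u*⟩`, leaving
`α‖u − u*‖² ≤ ⟨Au − ℓ, ṽ − u + v − u*⟩ + c‖u − u*‖‖u − ṽ‖`. Young's inequality absorbs
the last term into the left-hand side.
-/

theorem falk_error_identity {𝕜 E : Type*} [NormedField 𝕜] [SeminormedAddCommGroup E]
    [NormedSpace 𝕜 E] (A : E →L[𝕜] E →L[𝕜] 𝕜) (l : E →L[𝕜] 𝕜) (u v w t : E) :
    A (u - w) (u - w) =
      (A u - l) (t - u + v - w) - (A u - l) (v - u) - (A w - l) (t - w) + A (u - w) (u - t) := by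
  simp only [map_sub, map_add, sub_apply]
  ring

theorem sq_le_of_mul_sq_le_add_mul_mul {α c E T Q : ℝ} (hα : 0 < α)
    (h : α * E ^ 2 ≤ Q + c * E * T) :
    E ^ 2 ≤ 4 * c ^ 2 / α ^ 2 * T ^ 2 + 4 / α * Q := by
  -- Young's inequality with weight `3α/4`: `c E T ≤ (3α/4) E² + (c²/(3α)) T²`
  have young : 12 * α * (c * E * T) ≤ 9 * α ^ 2 * E ^ 2 + 4 * c ^ 2 * T ^ 2 := by
    nlinarith [sq_nonneg (3 * α * E - 2 * c * T)]
  have hcT : 0 ≤ c ^ 2 * T ^ 2 := by positivity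
  have hαE : α ^ 2 * E ^ 2 ≤ 4 * c ^ 2 * T ^ 2 + 4 * α * Q := by nlinarith
  rw [div_mul_eq_mul_div, div_mul_eq_mul_div, div_add_div _ _ (by positivity) hα.ne',
    le_div_iff₀ (by positivity)]
  nlinarith

theorem falk_estimate_general
    {V : Type*} [NormedAddCommGroup V] [InnerProductSpace ℝ V]
    (W : Submodule ℝ V)
    (A : V →L[ℝ] V →L[ℝ] ℝ) (l : V →L[ℝ] ℝ)
    (c α : ℝ) (hα : 0 < α)
    (hAcont : ∀ v : V, ‖A v‖ ≤ c * ‖v‖)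
    (hAell : ∀ v : V, α * ‖v‖ ^ 2 ≤ A v v)
    (K : Set V)
    (Kt : Set W)
    (u : V)
    (huVI : ∀ v ∈ K, 0 ≤ (A u - l) (v - u))
    (ustar : W)
    (hustarVI : ∀ vt ∈ Kt, 0 ≤ (A (ustar : V) - l) ((vt : V) - (ustar : V))) :
    ∀ v ∈ K, ∀ vt ∈ Kt,
      ‖u - (ustar : V)‖ ^ 2 ≤
        (2 + 4 * c ^ 2 / α ^ 2) * ‖u - (vt : V)‖ ^ 2
          + (4 / α) * (A u - l) ((vt : V) - u + v - (ustar : V)) := by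
  intro v hv vt hvt
  have hbound : A (u - ustar) (u - vt) ≤ c * ‖u - (ustar : V)‖ * ‖u - (vt : V)‖ :=
    (le_abs_self _).trans ((A _).le_of_opNorm_le (hAcont _) _)
  have hcoercive : α * ‖u - (ustar : V)‖ ^ 2 ≤
      (A u - l) ((vt : V) - u + v - ustar) + c * ‖u - (ustar : V)‖ * ‖u - (vt : V)‖ := by
    have := falk_error_identity A l u v ustar vt
    linarith [hAell (u - ustar), huVI v hv, hustarVI vt hvt]
  have hest := sq_le_of_mul_sq_le_add_mul_mul hα hcoercive
  have hT : 0 ≤ ‖u - (vt : V)‖ ^ 2 := sq_nonneg _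
  linarith [add_mul 2 (4 * c ^ 2 / α ^ 2) (‖u - (vt : V)‖ ^ 2)]

/-- Falk's theorem (with slightly enlarged constants): if `u ∈ K` solves the
continuous VI and `u* ∈ K̃ ⊆ W` solves the discrete VI with the *same* operator
and data, then for all `v ∈ K`, `ṽ ∈ K̃`:
`‖u − u*‖² ≤ (2 + 4c²/α²)‖u − ṽ‖² + (4/α)⟨Au − ℓ, ṽ − u + v − u*⟩`. -/
theorem falk_estimate
    {V : Type*} [NormedAddCommGroup V] [InnerProductSpace ℝ V] [CompleteSpace V]
    (W : Submodule ℝ V) [CompleteSpace W]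
    (A : V →L[ℝ] V →L[ℝ] ℝ) (l : V →L[ℝ] ℝ)
    (c α : ℝ) (hc : 0 < c) (hα : 0 < α)
    (hAcont : ∀ v : V, ‖A v‖ ≤ c * ‖v‖)
    (hAell : ∀ v : V, α * ‖v‖ ^ 2 ≤ A v v)
    (K : Set V) (hKne : K.Nonempty) (hKconv : Convex ℝ K) (hKcl : IsClosed K)
    (Kt : Set W) (hKtne : Kt.Nonempty) (hKtconv : Convex ℝ Kt) (hKtcl : IsClosed Kt)
    (u : V) (hu : u ∈ K)
    (huVI : ∀ v ∈ K, 0 ≤ (A u - l) (v - u))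
    (ustar : W) (hustar : ustar ∈ Kt)
    (hustarVI : ∀ vt ∈ Kt, 0 ≤ (A (ustar : V) - l) ((vt : V) - (ustar : V))) :
    ∀ v ∈ K, ∀ vt ∈ Kt,
      ‖u - (ustar : V)‖ ^ 2 ≤
        (2 + 4 * c ^ 2 / α ^ 2) * ‖u - (vt : V)‖ ^ 2
          + (4 / α) * (A u - l) ((vt : V) - u + v - (ustar : V)) :=
  falk_estimate_general W A l c α hα hAcont hAell K Kt u huVI ustar hustarVI
end

section
/- Let (u, λ) ∈ K × Λ satisfy ⟨Bu, μ⟩ − ⟨Cλ, μ⟩ = ⟨g, μ⟩ for all μ ∈ Λ, and let (ũ, λ̃) ∈ K̃ × Λ̃ satisfy ⟨Bũ, μ̃⟩ − ⟨Cλ̃, μ̃⟩ = ⟨g, μ̃⟩ for all μ̃ ∈ Λ̃. Then for every μ̃ ∈ Λ̃ there holds ‖λ − λ̃‖_Λ ≤ (1 + c_C/α_C) ‖λ − μ̃‖_Λ + (c_B/α_C) ‖u − ũ‖_V. -/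
/-!
Subtracting the discrete equation from the continuous one gives Galerkin orthogonality
`⟨C(λ - λ̃), μ̃⟩ = ⟨B(u - ũ), μ̃⟩` on `Λ̃`. Testing the ellipticity of `C` with
`e = μ̃ - λ̃ ∈ Λ̃` and splitting `λ - λ̃ = (λ - μ̃) + e` yields
`α_C ‖e‖ ≤ c_C ‖λ - μ̃‖ + c_B ‖u - ũ‖`; the triangle inequality finishes the estimate.
-/

lemma le_div_of_mul_sq_le_mul {α a x : ℝ} (hα : 0 < α) (ha : 0 ≤ a) (hx : 0 ≤ x)
    (h : α * x ^ 2 ≤ a * x) : x ≤ a / α := by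
  rcases hx.eq_or_lt with rfl | hx
  · exact div_nonneg ha hα.le
  · rw [le_div_iff₀ hα]
    nlinarith

section BilinearForm

variable {E F : Type*} [SeminormedAddCommGroup E] [NormedSpace ℝ E]
  [SeminormedAddCommGroup F] [NormedSpace ℝ F]

lemma ContinuousLinearMap.apply_apply_le_of_norm_le (f : E →L[ℝ] F →L[ℝ] ℝ) {c : ℝ}
    (hf : ∀ x, ‖f x‖ ≤ c * ‖x‖) (x : E) (y : F) : f x y ≤ c * ‖x‖ * ‖y‖ :=
  calc f x y ≤ ‖f x‖ * ‖y‖ := (le_abs_self _).trans ((f x).le_opNorm y)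
    _ ≤ c * ‖x‖ * ‖y‖ := mul_le_mul_of_nonneg_right (hf x) (norm_nonneg y)

lemma galerkin_orthogonality (S : Submodule ℝ F) (B : E →L[ℝ] F →L[ℝ] ℝ)
    (C : F →L[ℝ] F →L[ℝ] ℝ) (g : F →L[ℝ] ℝ) {u ut : E} {lam lamt : F}
    (huEq : ∀ μ ∈ S, B u μ - C lam μ = g μ) (hutEq : ∀ μ ∈ S, B ut μ - C lamt μ = g μ) :
    ∀ μ ∈ S, C (lam - lamt) μ = B (u - ut) μ := by
  intro μ hμ
  have := huEq μ hμ
  have := hutEq μ hμ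
  simp only [map_sub, sub_apply]
  linarith

end BilinearForm

theorem norm_sub_le_of_galerkin_defect {Λ : Type*} [SeminormedAddCommGroup Λ] [NormedSpace ℝ Λ]
    (S : Submodule ℝ Λ) (C : Λ →L[ℝ] Λ →L[ℝ] ℝ) {cC αC : ℝ} (hαC : 0 < αC)
    (hCcont : ∀ μ : Λ, ‖C μ‖ ≤ cC * ‖μ‖) (hCell : ∀ μ : Λ, αC * ‖μ‖ ^ 2 ≤ C μ μ)
    (r : Λ →L[ℝ] ℝ) {lam lamt μt : Λ} (hlamt : lamt ∈ S) (hμt : μt ∈ S)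
    (horth : ∀ ν ∈ S, C (lam - lamt) ν = r ν) :
    ‖lam - lamt‖ ≤ (1 + cC / αC) * ‖lam - μt‖ + ‖r‖ / αC := by
  set e := μt - lamt
  have hsplit : C e e = C (μt - lam) e + r e := by
    rw [← horth e (sub_mem hμt hlamt), ← add_apply, ← map_add, sub_add_sub_cancel]
  have hCe : αC * ‖e‖ ^ 2 ≤ (cC * ‖lam - μt‖ + ‖r‖) * ‖e‖ := by
    have hC := C.apply_apply_le_of_norm_le hCcont (μt - lam) e
    have hr := (le_abs_self (r e)).trans (r.le_opNorm e)
    rw [norm_sub_rev] at hC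
    linarith [hCell e]
  have hcC : 0 ≤ cC * ‖lam - μt‖ := (norm_nonneg _).trans (hCcont _)
  have he := le_div_of_mul_sq_le_mul hαC (by positivity) (norm_nonneg e) hCe
  calc ‖lam - lamt‖ ≤ ‖lam - μt‖ + ‖e‖ := norm_sub_le_norm_sub_add_norm_sub _ _ _
    _ ≤ ‖lam - μt‖ + (cC * ‖lam - μt‖ + ‖r‖) / αC := by gcongr
    _ = (1 + cC / αC) * ‖lam - μt‖ + ‖r‖ / αC := by ring

theorem multiplier_strang_estimate_general
    {V Λ : Type*} [NormedAddCommGroup V] [InnerProductSpace ℝ V]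
    [NormedAddCommGroup Λ] [InnerProductSpace ℝ Λ]
    (Λt : Submodule ℝ Λ)
    (B : V →L[ℝ] Λ →L[ℝ] ℝ) (C : Λ →L[ℝ] Λ →L[ℝ] ℝ) (g : Λ →L[ℝ] ℝ)
    (cB cC αC : ℝ) (hαC : 0 < αC)
    (hBcont : ∀ v : V, ‖B v‖ ≤ cB * ‖v‖)
    (hCcont : ∀ μ : Λ, ‖C μ‖ ≤ cC * ‖μ‖)
    (hCell : ∀ μ : Λ, αC * ‖μ‖ ^ 2 ≤ C μ μ)
    (u : V) (lam : Λ)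
    (huEq : ∀ μ : Λ, B u μ - C lam μ = g μ)
    (ut : V) (lamt : Λ) (hlamt : lamt ∈ Λt)
    (hutEq : ∀ μt ∈ Λt, B ut μt - C lamt μt = g μt) :
    ∀ μt ∈ Λt,
      ‖lam - lamt‖ ≤ (1 + cC / αC) * ‖lam - μt‖ + (cB / αC) * ‖u - ut‖ := by
  intro μt hμt
  have horth := galerkin_orthogonality Λt B C g (fun μ _ => huEq μ) hutEq
  calc ‖lam - lamt‖ ≤ (1 + cC / αC) * ‖lam - μt‖ + ‖B (u - ut)‖ / αC :=
        norm_sub_le_of_galerkin_defect Λt C hαC hCcont hCell _ hlamt hμt horth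
    _ ≤ (1 + cC / αC) * ‖lam - μt‖ + (cB / αC) * ‖u - ut‖ := by
        rw [div_mul_eq_mul_div]
        gcongr
        exact hBcont _

/-- Strang-type estimate for the Lagrange multiplier: if `(u, λ)` satisfies
the continuous equation `⟨Bu, μ⟩ − ⟨Cλ, μ⟩ = ⟨g, μ⟩` for all `μ ∈ Λ` and
`(ũ, λ̃)` satisfies the discrete equation tested over `Λ̃`, then for every
`μ̃ ∈ Λ̃`: `‖λ − λ̃‖ ≤ (1 + c_C/α_C)‖λ − μ̃‖ + (c_B/α_C)‖u − ũ‖`. -/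
theorem multiplier_strang_estimate
    {V Λ : Type*} [NormedAddCommGroup V] [InnerProductSpace ℝ V] [CompleteSpace V]
    [NormedAddCommGroup Λ] [InnerProductSpace ℝ Λ] [CompleteSpace Λ]
    (Vt : Submodule ℝ V) (Λt : Submodule ℝ Λ) [FiniteDimensional ℝ Λt]
    (B : V →L[ℝ] Λ →L[ℝ] ℝ) (C : Λ →L[ℝ] Λ →L[ℝ] ℝ) (g : Λ →L[ℝ] ℝ)
    (cB cC αC : ℝ) (hcB : 0 < cB) (hcC : 0 < cC) (hαC : 0 < αC)
    (hBcont : ∀ v : V, ‖B v‖ ≤ cB * ‖v‖)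
    (hCcont : ∀ μ : Λ, ‖C μ‖ ≤ cC * ‖μ‖)
    (hCsym : ∀ μ ν : Λ, C μ ν = C ν μ)
    (hCell : ∀ μ : Λ, αC * ‖μ‖ ^ 2 ≤ C μ μ)
    (K : Set V) (hKne : K.Nonempty) (hKconv : Convex ℝ K) (hKcl : IsClosed K)
    (Kt : Set V) (hKtne : Kt.Nonempty) (hKtconv : Convex ℝ Kt) (hKtcl : IsClosed Kt)
    (hKtVt : Kt ⊆ (Vt : Set V))
    (u : V) (lam : Λ) (hu : u ∈ K)
    (huEq : ∀ μ : Λ, B u μ - C lam μ = g μ)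
    (ut : V) (lamt : Λ) (hut : ut ∈ Kt) (hlamt : lamt ∈ Λt)
    (hutEq : ∀ μt ∈ Λt, B ut μt - C lamt μt = g μt) :
    ∀ μt ∈ Λt,
      ‖lam - lamt‖ ≤ (1 + cC / αC) * ‖lam - μt‖ + (cB / αC) * ‖u - ut‖ :=
  multiplier_strang_estimate_general Λt B C g cB cC αC hαC hBcont hCcont hCell u lam huEq ut lamt
    hlamt hutEq
end

section
/- Let (u, λ) ∈ K × Λ solve the continuous constrained problem: ⟨Du, v − u⟩ + ⟨Bᵀλ, v − u⟩ ≥ ⟨f, v − u⟩ for all v ∈ K and ⟨Bu, μ⟩ − ⟨Cλ, μ⟩ = ⟨g, μ⟩ for all μ ∈ Λ. Let (ũ, λ̃) ∈ K̃ × Λ̃ solve the discrete constrained problem: ⟨Dũ, ṽ − ũ⟩ + ⟨Bᵀλ̃, ṽ − ũ⟩ ≥ ⟨f, ṽ − ũ⟩ for all ṽ ∈ K̃ and ⟨Bũ, μ̃⟩ − ⟨Cλ̃, μ̃⟩ = ⟨g, μ̃⟩ for all μ̃ ∈ Λ̃. Then there exist constants C₁, C₂, C₃ > 0, depending only on c_D,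 c_B, c_{Bᵀ}, c_C, α_D, α_C, such that ‖u − ũ‖_V² + ‖λ − λ̃‖_Λ² ≤ C₁ ‖u − ṽ‖_V² + C₂ ‖λ − μ̃‖_Λ² + C₃ ⟨Du + Bᵀλ − f, ṽ − u + v − ũ⟩ for all ṽ ∈ K̃, v ∈ K and μ̃ ∈ Λ̃. -/
private lemma young_aux (c α x y : ℝ) (hα : 0 < α) :
    c * x * y ≤ α / 4 * x ^ 2 + c ^ 2 / α * y ^ 2 := by
  have hq : c ^ 2 / α * α = c ^ 2 := div_mul_cancel₀ _ hα.ne'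
  nlinarith [sq_nonneg (α * x - 2 * c * y), hα, sq_nonneg y]

private lemma min_aux (m p q s t R : ℝ) (hm1 : m ≤ p) (hm2 : m ≤ q)
    (hs : 0 ≤ s) (ht : 0 ≤ t) (h : p * s + q * t ≤ R) : m * (s + t) ≤ R := by
  nlinarith

set_option maxHeartbeats 1000000 in
/-- Theorem 5.3: a priori error estimate for Galerkin discretizations of
variational-equality-constrained variational inequalities.  There exist
constants `C₁, C₂, C₃ > 0` depending only on `c_D, c_B, c_{Bᵀ}, c_C, α_D, α_C`
such that for any such continuous/discrete solution pair and all `ṽ ∈ K̃`,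
`v ∈ K`, `μ̃ ∈ Λ̃`:
`‖u − ũ‖² + ‖λ − λ̃‖² ≤ C₁‖u − ṽ‖² + C₂‖λ − μ̃‖²
  + C₃⟨Du + Bᵀλ − f, ṽ − u + v − ũ⟩`. -/
theorem constrained_vi_apriori_error_estimate
    (cD αD cB cBt cC αC : ℝ)
    (hcD : 0 < cD) (hαD : 0 < αD) (hcB : 0 < cB) (hcBt : 0 < cBt)
    (hcC : 0 < cC) (hαC : 0 < αC) :
    ∃ C₁ C₂ C₃ : ℝ, 0 < C₁ ∧ 0 < C₂ ∧ 0 < C₃ ∧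
      ∀ (V Λ : Type*)
        [NormedAddCommGroup V] [InnerProductSpace ℝ V] [CompleteSpace V]
        [NormedAddCommGroup Λ] [InnerProductSpace ℝ Λ] [CompleteSpace Λ]
        (Vt : Submodule ℝ V) (Λt : Submodule ℝ Λ),
        FiniteDimensional ℝ Vt → FiniteDimensional ℝ Λt →
        ∀ (D : V →L[ℝ] V →L[ℝ] ℝ) (B : V →L[ℝ] Λ →L[ℝ] ℝ)
          (C : Λ →L[ℝ] Λ →L[ℝ] ℝ) (f : V →L[ℝ] ℝ) (g : Λ →L[ℝ] ℝ),
        (∀ v : V, ‖D v‖ ≤ cD * ‖v‖) →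
        (∀ v : V, αD * ‖v‖ ^ 2 ≤ D v v) →
        (∀ v : V, ‖B v‖ ≤ cB * ‖v‖) →
        (∀ μ : Λ, ‖B.flip μ‖ ≤ cBt * ‖μ‖) →
        (∀ μ : Λ, ‖C μ‖ ≤ cC * ‖μ‖) →
        (∀ μ ν : Λ, C μ ν = C ν μ) →
        (∀ μ : Λ, αC * ‖μ‖ ^ 2 ≤ C μ μ) →
        ∀ (K : Set V), K.Nonempty → Convex ℝ K → IsClosed K →
        ∀ (Kt : Set V), Kt.Nonempty → Convex ℝ Kt → IsClosed Kt →
          Kt ⊆ (Vt : Set V) →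
        ∀ (u : V) (lam : Λ), u ∈ K →
        (∀ v ∈ K, f (v - u) ≤ D u (v - u) + B.flip lam (v - u)) →
        (∀ μ : Λ, B u μ - C lam μ = g μ) →
        ∀ (ut : V) (lamt : Λ), ut ∈ Kt → lamt ∈ Λt →
        (∀ vt ∈ Kt, f (vt - ut) ≤ D ut (vt - ut) + B.flip lamt (vt - ut)) →
        (∀ μt ∈ Λt, B ut μt - C lamt μt = g μt) →
        ∀ vt ∈ Kt, ∀ v ∈ K, ∀ μt ∈ Λt,
          ‖u - ut‖ ^ 2 + ‖lam - lamt‖ ^ 2 ≤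
            C₁ * ‖u - vt‖ ^ 2 + C₂ * ‖lam - μt‖ ^ 2
              + C₃ * (D u + B.flip lam - f) (vt - u + v - ut) := by
  set m := min (αD / 2) (αC / 2) with hmdef
  have hm : 0 < m := lt_min (by positivity) (by positivity)
  refine ⟨(cD ^ 2 / αD + cBt ^ 2 / αC) / m, (cB ^ 2 / αD + cC ^ 2 / αC) / m, 1 / m,
    by positivity, by positivity, by positivity, ?_⟩
  intro V Λ _ _ _ _ _ _ Vt Λt _ _ D B C f g hD1 hD2 hB1 hBt1 hC1 hCsym hC2
    K hKne hKcv hKcl Kt hKtne hKtcv hKtcl hKtV u lam hu hVI hEq ut lamt hut hlamt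
    hVIt hEqt vt hvt v hv μt hμt
  have key : D (u - ut) (u - ut) + C (lam - lamt) (lam - lamt)
      ≤ D (u - ut) (u - vt) + (D u + B.flip lam - f) (vt - u + v - ut)
        + B.flip (lam - lamt) (u - vt) + B (u - ut) (μt - lam)
        + C (lam - lamt) (lam - μt) := by
    have h1 := hVI v hv
    have h2 := hVIt vt hvt
    have h3 := hEq (μt - lamt)
    have h4 := hEqt (μt - lamt) (Submodule.sub_mem _ hμt hlamt)
    simp only [map_sub, map_add, ContinuousLinearMap.sub_apply,
      ContinuousLinearMap.add_apply, ContinuousLinearMap.flip_apply] at h1 h2 h3 h4 ⊢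
    linarith
  have bD : D (u - ut) (u - vt) ≤ cD * ‖u - ut‖ * ‖u - vt‖ := by
    have h := (D (u - ut)).le_opNorm (u - vt)
    have h2 := mul_le_mul_of_nonneg_right (hD1 (u - ut)) (norm_nonneg (u - vt))
    calc D (u - ut) (u - vt) ≤ ‖D (u - ut) (u - vt)‖ := Real.le_norm_self _
      _ ≤ cD * ‖u - ut‖ * ‖u - vt‖ := h.trans h2
  have bBt : B.flip (lam - lamt) (u - vt) ≤ cBt * ‖lam - lamt‖ * ‖u - vt‖ := by
    have h := (B.flip (lam - lamt)).le_opNorm (u - vt)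
    have h2 := mul_le_mul_of_nonneg_right (hBt1 (lam - lamt)) (norm_nonneg (u - vt))
    calc B.flip (lam - lamt) (u - vt) ≤ ‖B.flip (lam - lamt) (u - vt)‖ := Real.le_norm_self _
      _ ≤ cBt * ‖lam - lamt‖ * ‖u - vt‖ := h.trans h2
  have bB : B (u - ut) (μt - lam) ≤ cB * ‖u - ut‖ * ‖lam - μt‖ := by
    have h := (B (u - ut)).le_opNorm (μt - lam)
    have h2 := mul_le_mul_of_nonneg_right (hB1 (u - ut)) (norm_nonneg (μt - lam))
    have h3 : ‖μt - lam‖ = ‖lam - μt‖ := norm_sub_rev _ _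
    calc B (u - ut) (μt - lam) ≤ ‖B (u - ut) (μt - lam)‖ := Real.le_norm_self _
      _ ≤ cB * ‖u - ut‖ * ‖μt - lam‖ := h.trans h2
      _ = cB * ‖u - ut‖ * ‖lam - μt‖ := by rw [h3]
  have bC : C (lam - lamt) (lam - μt) ≤ cC * ‖lam - lamt‖ * ‖lam - μt‖ := by
    have h := (C (lam - lamt)).le_opNorm (lam - μt)
    have h2 := mul_le_mul_of_nonneg_right (hC1 (lam - lamt)) (norm_nonneg (lam - μt))
    calc C (lam - lamt) (lam - μt) ≤ ‖C (lam - lamt) (lam - μt)‖ := Real.le_norm_self _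
      _ ≤ cC * ‖lam - lamt‖ * ‖lam - μt‖ := h.trans h2
  set a := ‖u - ut‖; set b := ‖lam - lamt‖; set X := ‖u - vt‖; set Y := ‖lam - μt‖
  have ha : 0 ≤ a := norm_nonneg _
  have hb : 0 ≤ b := norm_nonneg _
  have hX : 0 ≤ X := norm_nonneg _
  have hY : 0 ≤ Y := norm_nonneg _
  have y1 : cD * a * X ≤ αD / 4 * a ^ 2 + cD ^ 2 / αD * X ^ 2  := young_aux _ _ _ _ hαD
  have y2 : cBt * b * X ≤ αC / 4 * b ^ 2 + cBt ^ 2 / αC * X ^ 2  := young_aux _ _ _ _ hαC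
  have y3 : cB * a * Y ≤ αD / 4 * a ^ 2 + cB ^ 2 / αD * Y ^ 2  := young_aux _ _ _ _ hαD
  have y4 : cC * b * Y ≤ αC / 4 * b ^ 2 + cC ^ 2 / αC * Y ^ 2  := young_aux _ _ _ _ hαC
  have hEll1 := hD2 (u - ut)
  have hEll2 := hC2 (lam - lamt)
  set r := (D u + B.flip lam - f) (vt - u + v - ut)
  have main : αD / 2 * a ^ 2 + αC / 2 * b ^ 2
      ≤ (cD ^ 2 / αD + cBt ^ 2 / αC) * X ^ 2 + (cB ^ 2 / αD + cC ^ 2 / αC) * Y ^ 2 + r := by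
    linarith only [key, bD, bBt, bB, bC, y1, y2, y3, y4, hEll1, hEll2]
  have hm1 : m ≤ αD / 2 := min_le_left _ _
  have hm2 : m ≤ αC / 2 := min_le_right _ _
  have step : m * (a ^ 2 + b ^ 2)
      ≤ (cD ^ 2 / αD + cBt ^ 2 / αC) * X ^ 2 + (cB ^ 2 / αD + cC ^ 2 / αC) * Y ^ 2 + r :=
    min_aux _ _ _ _ _ _ hm1 hm2 (sq_nonneg a) (sq_nonneg b) main
  have h2 : a ^ 2 + b ^ 2
      ≤ ((cD ^ 2 / αD + cBt ^ 2 / αC) * X ^ 2 + (cB ^ 2 / αD + cC ^ 2 / αC) * Y ^ 2 + r) / m :=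
    (le_div_iff₀' hm).mpr step
  calc a ^ 2 + b ^ 2
      ≤ ((cD ^ 2 / αD + cBt ^ 2 / αC) * X ^ 2 + (cB ^ 2 / αD + cC ^ 2 / αC) * Y ^ 2 + r) / m := h2
    _ = (cD ^ 2 / αD + cBt ^ 2 / αC) / m * X ^ 2 + (cB ^ 2 / αD + cC ^ 2 / αC) / m * Y ^ 2
        + 1 / m * r := by ring
end
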